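/- Let n ≥ 2, m ≥ 2, μ ∈ ℝ, let P be an orthogonal n×n matrix, and let B_1 = P H₁ Pᵗ, B_2 = P H₂ Pᵗ, and B_r = 0 for 3 ≤ r ≤ m, where H₁ is the n×n matrix with (1,2) and (2,1) entries equal to μ and all other entries 0, and H₂ is the n×n diagonal matrix with (1,1) entry μ, (2,2) entry −μ, and all other entries 0. Then Σ_{r,s=1}^m ‖[B_r, B_s]‖² = (Σ_{r=1}^m ‖B_r‖²)². -/

import Mathlib

/-! Conjugation by an orthogonal matrix preserves the Frobenius norm and commutes with taking
commutators, so it suffices to treat `P = 1`. Only `B₁ = H₁` and `B₂ = H₂` are nonzero, hence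
both sides reduce to `2‖[H₁, H₂]‖² = 2 · 8μ⁴` and `(‖H₁‖² + ‖H₂‖²)² = (2μ² + 2μ²)²`. -/

open Matrix BigOperators

/-- The squared Frobenius norm: sum of squares of the entries. -/
noncomputable def frobSq {n : ℕ} (A : Matrix (Fin n) (Fin n) ℝ) : ℝ :=
  ∑ i, ∑ j, (A i j) ^ 2

/-- The commutator of two matrices. -/
def mcomm {n : ℕ} (A B : Matrix (Fin n) (Fin n) ℝ) : Matrix (Fin n) (Fin n) ℝ :=
  A * B - B * A

/-- The n×n matrix with (1,2) and (2,1) entries equal to μ and all other entries 0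
(using 0-based indices 0 and 1). -/
def H1 (n : ℕ) (μ : ℝ) : Matrix (Fin n) (Fin n) ℝ :=
  Matrix.of fun i j => if (i.1 = 0 ∧ j.1 = 1) ∨ (i.1 = 1 ∧ j.1 = 0) then μ else 0

/-- The n×n diagonal matrix with (1,1) entry μ, (2,2) entry −μ and all other entries 0
(using 0-based indices 0 and 1). -/
def H2 (n : ℕ) (μ : ℝ) : Matrix (Fin n) (Fin n) ℝ :=
  Matrix.of fun i j =>
    if i.1 = 0 ∧ j.1 = 0 then μ else if i.1 = 1 ∧ j.1 = 1 then -μ else 0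

section General

variable {n : ℕ}

@[simp]
lemma frobSq_zero : frobSq (0 : Matrix (Fin n) (Fin n) ℝ) = 0 := by
  simp [frobSq]

@[simp]
lemma frobSq_neg (A : Matrix (Fin n) (Fin n) ℝ) : frobSq (-A) = frobSq A := by
  simp [frobSq]

lemma frobSq_eq_trace_transpose_mul (A : Matrix (Fin n) (Fin n) ℝ) :
    frobSq A = (Aᵀ * A).trace := by
  simp only [frobSq, trace, diag, mul_apply, transpose_apply, sq]
  exact Finset.sum_comm

lemma frobSq_single_add_single {i j i' j' : Fin n} (hi : i ≠ i') (c c' : ℝ) :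
    frobSq (Matrix.single i j c + Matrix.single i' j' c') = c ^ 2 + c' ^ 2 := by
  have hsq : ∀ k l : Fin n, ((Matrix.single i j c + Matrix.single i' j' c') k l) ^ 2
      = (if i = k ∧ j = l then c ^ 2 else 0) + (if i' = k ∧ j' = l then c' ^ 2 else 0) := by
    intro k l
    simp only [Matrix.add_apply, Matrix.single, of_apply]
    split_ifs with h h' h' <;> first | exact absurd (h.1.trans h'.1.symm) hi | ring
  simp only [frobSq, hsq]
  simp [Finset.sum_add_distrib, ite_and]

@[simp]
lemma mcomm_self (A : Matrix (Fin n) (Fin n) ℝ) : mcomm A A = 0 :=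
  sub_self _

@[simp]
lemma mcomm_zero_left (A : Matrix (Fin n) (Fin n) ℝ) : mcomm 0 A = 0 := by
  simp [mcomm]

@[simp]
lemma mcomm_zero_right (A : Matrix (Fin n) (Fin n) ℝ) : mcomm A 0 = 0 := by
  simp [mcomm]

lemma mcomm_swap (A C : Matrix (Fin n) (Fin n) ℝ) : mcomm C A = -mcomm A C :=
  (neg_sub _ _).symm

section Orthogonal

variable {P : Matrix (Fin n) (Fin n) ℝ}

lemma conj_mul_conj (hP : P ∈ orthogonalGroup (Fin n) ℝ) (A C : Matrix (Fin n) (Fin n) ℝ) :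
    P * A * Pᵀ * (P * C * Pᵀ) = P * (A * C) * Pᵀ := by
  simp only [Matrix.mul_assoc, ← Matrix.mul_assoc Pᵀ P,
    (mem_orthogonalGroup_iff' (Fin n) ℝ).mp hP, Matrix.one_mul]

lemma frobSq_conj (hP : P ∈ orthogonalGroup (Fin n) ℝ) (A : Matrix (Fin n) (Fin n) ℝ) :
    frobSq (P * A * Pᵀ) = frobSq A := by
  have htr : (P * A * Pᵀ)ᵀ = P * Aᵀ * Pᵀ := by
    simp [transpose_mul, Matrix.mul_assoc]
  rw [frobSq_eq_trace_transpose_mul, frobSq_eq_trace_transpose_mul, htr, conj_mul_conj hP,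
    trace_mul_cycle, ← Matrix.mul_assoc, (mem_orthogonalGroup_iff' (Fin n) ℝ).mp hP,
    Matrix.one_mul]

lemma mcomm_conj (hP : P ∈ orthogonalGroup (Fin n) ℝ) (A C : Matrix (Fin n) (Fin n) ℝ) :
    mcomm (P * A * Pᵀ) (P * C * Pᵀ) = P * mcomm A C * Pᵀ := by
  rw [mcomm, mcomm, conj_mul_conj hP, conj_mul_conj hP, Matrix.mul_sub, Matrix.sub_mul]

end Orthogonal

end General

section PairSupported

variable {ι : Type*} [Fintype ι] {n : ℕ} {B : ι → Matrix (Fin n) (Fin n) ℝ} {a b : ι}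

lemma sum_frobSq_of_pair_supported (hab : a ≠ b) (hB : ∀ r, r ≠ a ∧ r ≠ b → B r = 0) :
    ∑ r, frobSq (B r) = frobSq (B a) + frobSq (B b) :=
  Fintype.sum_eq_add a b hab fun r hr => by simp [hB r hr]

lemma sum_sum_frobSq_mcomm_of_pair_supported (hab : a ≠ b)
    (hB : ∀ r, r ≠ a ∧ r ≠ b → B r = 0) :
    ∑ r, ∑ s, frobSq (mcomm (B r) (B s)) = 2 * frobSq (mcomm (B a) (B b)) := by
  have hrow : ∀ r, ∑ s, frobSq (mcomm (B r) (B s))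
      = frobSq (mcomm (B r) (B a)) + frobSq (mcomm (B r) (B b)) := fun r =>
    Fintype.sum_eq_add a b hab fun s hs => by simp [hB s hs]
  rw [Fintype.sum_eq_add a b hab fun r hr => by simp [hB r hr], hrow, hrow,
    mcomm_swap (B a) (B b)]
  simp only [mcomm_self, frobSq_zero, frobSq_neg]
  ring

end PairSupported

section Model

variable (n : ℕ) (μ : ℝ)

lemma H1_eq_single_add_single :
    H1 (n + 2) μ = Matrix.single 0 1 μ + Matrix.single 1 0 μ := by
  ext i j
  simp only [H1, of_apply, Matrix.add_apply, Matrix.single, Fin.ext_iff, Fin.val_zero, Fin.val_one]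
  split_ifs <;> first | (exfalso; omega) | ring

lemma H2_eq_single_add_single :
    H2 (n + 2) μ = Matrix.single 0 0 μ + Matrix.single 1 1 (-μ) := by
  ext i j
  simp only [H2, of_apply, Matrix.add_apply, Matrix.single, Fin.ext_iff, Fin.val_zero, Fin.val_one]
  split_ifs <;> first | (exfalso; omega) | ring

lemma mcomm_H1_H2 :
    mcomm (H1 (n + 2) μ) (H2 (n + 2) μ) =
      Matrix.single 0 1 (-(2 * μ ^ 2)) + Matrix.single 1 0 (2 * μ ^ 2) := by
  have h01 : (0 : Fin (n + 2)) ≠ 1 := by simp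
  rw [mcomm, H1_eq_single_add_single, H2_eq_single_add_single]
  simp only [add_mul, mul_add, single_mul_single_same, single_mul_single_of_ne _ _ _ _ h01,
    single_mul_single_of_ne _ _ _ _ h01.symm, add_zero, zero_add]
  ext i j
  simp only [Matrix.sub_apply, Matrix.add_apply, Matrix.single, of_apply]
  split_ifs <;> ring

lemma frobSq_H1 : frobSq (H1 (n + 2) μ) = 2 * μ ^ 2 := by
  rw [H1_eq_single_add_single, frobSq_single_add_single (by simp)]
  ring

lemma frobSq_H2 : frobSq (H2 (n + 2) μ) = 2 * μ ^ 2 := by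
  rw [H2_eq_single_add_single, frobSq_single_add_single (by simp)]
  ring

lemma frobSq_mcomm_H1_H2 : frobSq (mcomm (H1 (n + 2) μ) (H2 (n + 2) μ)) = 8 * μ ^ 4 := by
  rw [mcomm_H1_H2, frobSq_single_add_single (by simp)]
  ring

end Model

theorem ddvv_equality_holds (n m : ℕ) (hn : 2 ≤ n) (hm : 2 ≤ m) (μ : ℝ)
    (P : Matrix (Fin n) (Fin n) ℝ) (hP : P ∈ Matrix.orthogonalGroup (Fin n) ℝ)
    (B : Fin m → Matrix (Fin n) (Fin n) ℝ)
    (hB : ∀ r : Fin m, B r =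
      if r.1 = 0 then P * H1 n μ * Pᵀ else if r.1 = 1 then P * H2 n μ * Pᵀ else 0) :
    ∑ r, ∑ s, frobSq (mcomm (B r) (B s)) = (∑ r, frobSq (B r)) ^ 2 := by
  obtain ⟨n, rfl⟩ : ∃ k, n = k + 2 := ⟨n - 2, by omega⟩
  obtain ⟨m, rfl⟩ : ∃ l, m = l + 2 := ⟨m - 2, by omega⟩
  have h01 : (0 : Fin (m + 2)) ≠ 1 := by simp
  have hB0 : B 0 = P * H1 (n + 2) μ * Pᵀ := by simp [hB]
  have hB1 : B 1 = P * H2 (n + 2) μ * Pᵀ := by simp [hB]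
  have hBrest : ∀ r, r ≠ 0 ∧ r ≠ 1 → B r = 0 := fun r ⟨h0, h1⟩ => by
    rw [hB, if_neg (show r.1 ≠ 0 from fun h => h0 (Fin.ext h)),
      if_neg (show r.1 ≠ 1 from fun h => h1 (Fin.ext h))]
  rw [sum_sum_frobSq_mcomm_of_pair_supported h01 hBrest, sum_frobSq_of_pair_supported h01 hBrest,
    hB0, hB1, mcomm_conj hP, frobSq_conj hP, frobSq_conj hP, frobSq_conj hP, frobSq_H1,
    frobSq_H2, frobSq_mcomm_H1_H2]
  ring
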